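/- arXiv:2603.16026 — 3 statements merged into one kernel-verified Lean document; each statement's English description precedes it below -/
import Mathlib

section
/- (Complete monotonicity, Proposition A.1.) The Stieltjes transfer function m is completely monotone on (0,∞): for every natural number n and every x > 0, (-1)^n times the n-th iterated derivative of m at x is nonnegative. -/
open MeasureTheory Set Filter

private lemma stieltjes_aux_int (ρ : ℝ → ℝ) (hρ_meas : Measurable ρ)
    (hρ_int : IntegrableOn ρ (Ioi (0 : ℝ))) (n : ℕ) {x : ℝ} (hx : 0 < x) :
    IntegrableOn (fun μ => ρ μ / (x + μ) ^ (n + 1)) (Ioi (0 : ℝ)) := by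
  have hmeas : AEStronglyMeasurable (fun μ => ρ μ / (x + μ) ^ (n + 1))
      (volume.restrict (Ioi (0:ℝ))) :=
    (hρ_meas.div ((measurable_const.add measurable_id).pow_const _)).aestronglyMeasurable
  refine Integrable.mono' (hρ_int.norm.const_mul ((x ^ (n + 1))⁻¹)) hmeas ?_
  filter_upwards [ae_restrict_mem measurableSet_Ioi] with μ hμ
  have hμ' : (0:ℝ) < μ := hμ
  have h1 : 0 < x + μ := by linarith
  rw [norm_div, norm_pow, Real.norm_of_nonneg h1.le, div_eq_inv_mul]
  gcongr
  linarith

private lemma stieltjes_aux_deriv (ρ : ℝ → ℝ) (hρ_meas : Measurable ρ)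
    (hρ_int : IntegrableOn ρ (Ioi (0 : ℝ))) (n : ℕ) {x : ℝ} (hx : 0 < x) :
    HasDerivAt (fun y => ∫ μ in Ioi (0:ℝ), ρ μ / (y + μ) ^ (n + 1))
      (∫ μ in Ioi (0:ℝ), ρ μ * (-(n + 1 : ℝ) / (x + μ) ^ (n + 2))) x := by
  have h := hasDerivAt_integral_of_dominated_loc_of_deriv_le
      (F := fun y μ => ρ μ / (y + μ) ^ (n + 1))
      (F' := fun y μ => ρ μ * (-(n + 1 : ℝ) / (y + μ) ^ (n + 2)))
      (bound := fun μ => ‖ρ μ‖ * ((n + 1 : ℝ) / (x / 2) ^ (n + 2)))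
      (Metric.ball_mem_nhds x (half_pos hx))
      (Filter.Eventually.of_forall fun y =>
        (hρ_meas.div ((measurable_const.add measurable_id).pow_const _)).aestronglyMeasurable)
      (stieltjes_aux_int ρ hρ_meas hρ_int n hx)
      ((hρ_meas.mul
        ((measurable_const.div ((measurable_const.add measurable_id).pow_const _)))).aestronglyMeasurable)
      ?_ (hρ_int.norm.mul_const _) ?_
  · exact h.2
  · filter_upwards [ae_restrict_mem measurableSet_Ioi] with μ hμ y hy
    have hμ' : (0:ℝ) < μ := hμ
    have hy' : x / 2 < y := by
      simp [Real.dist_eq] at hy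
      have := abs_lt.mp hy; linarith [this.1]
    have h1 : x / 2 < y + μ := by linarith
    have h2 : (0:ℝ) < x / 2 := half_pos hx
    rw [norm_mul, norm_div, norm_neg, norm_pow,
      Real.norm_of_nonneg (by linarith : (0:ℝ) ≤ y + μ),
      Real.norm_of_nonneg (by positivity : (0:ℝ) ≤ (n:ℝ) + 1)]
    gcongr
  · filter_upwards [ae_restrict_mem measurableSet_Ioi] with μ hμ y hy
    have hμ' : (0:ℝ) < μ := hμ
    have hy' : x / 2 < y := by
      simp [Real.dist_eq] at hy
      have := abs_lt.mp hy; linarith [this.1]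
    have ht : (0:ℝ) < y + μ := by linarith
    have h1 : HasDerivAt (fun y : ℝ => y + μ) 1 y := (hasDerivAt_id y).add_const μ
    have h2 : HasDerivAt (fun y : ℝ => (y + μ) ^ (n + 1))
        ((n + 1 : ℝ) * (y + μ) ^ n * 1) y := by
      have := h1.pow (n + 1)
      simpa [Pi.pow_def] using this
    have h3 := (h2.inv (by positivity)).const_mul (ρ μ)
    have heq : (fun y : ℝ => ρ μ * ((y + μ) ^ (n + 1))⁻¹)
        = fun y : ℝ => ρ μ / (y + μ) ^ (n + 1) := by
      funext z; rw [div_eq_mul_inv]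
    simp only [Pi.inv_apply] at h3
    rw [heq] at h3
    convert h3 using 1
    · rfl
    have hne : y + μ ≠ 0 := ht.ne'
    field_simp
    ring

private lemma stieltjes_aux_rep (ρ : ℝ → ℝ) (hρ_meas : Measurable ρ)
    (hρ_int : IntegrableOn ρ (Ioi (0 : ℝ)))
    (m : ℝ → ℝ)
    (hm : ∀ x : ℝ, 0 < x → m x = ∫ μ in Ioi (0 : ℝ), ρ μ / (x + μ)) :
    ∀ n : ℕ, ∀ x : ℝ, 0 < x →
      iteratedDeriv n m x
        = (-1 : ℝ) ^ n * n.factorial * ∫ μ in Ioi (0:ℝ), ρ μ / (x + μ) ^ (n + 1) := by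
  intro n
  induction n with
  | zero =>
      intro x hx
      simpa [iteratedDeriv_zero] using hm x hx
  | succ n ih =>
      intro x hx
      rw [iteratedDeriv_succ]
      have hev : iteratedDeriv n m =ᶠ[nhds x]
          fun y => (-1 : ℝ) ^ n * n.factorial * ∫ μ in Ioi (0:ℝ), ρ μ / (y + μ) ^ (n + 1) := by
        filter_upwards [Ioi_mem_nhds hx] with y hy using ih y hy
      rw [hev.deriv_eq]
      have hd := (stieltjes_aux_deriv ρ hρ_meas hρ_int n hx).const_mul
        ((-1 : ℝ) ^ n * n.factorial)
      rw [hd.deriv]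
      have hfun : (fun μ : ℝ => ρ μ * (-(n + 1 : ℝ) / (x + μ) ^ (n + 2)))
          = fun μ : ℝ => (-(n + 1 : ℝ)) * (ρ μ / (x + μ) ^ (n + 2)) := by
        funext μ; ring
      rw [hfun, integral_const_mul, Nat.factorial_succ]
      push_cast
      ring

/-- **Complete monotonicity of the Stieltjes transfer function (Proposition A.1).**
For ρ measurable, nonnegative on (0,∞) and integrable on (0,∞), the function
`m x = ∫ μ in (0,∞), ρ μ / (x + μ)` is completely monotone on `(0,∞)`:
for every `n : ℕ` and every `x > 0`, `(-1)^n * iteratedDeriv n m x ≥ 0`. -/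
theorem stieltjes_completely_monotone
    (ρ : ℝ → ℝ) (hρ_meas : Measurable ρ)
    (hρ_nonneg : ∀ μ : ℝ, 0 < μ → 0 ≤ ρ μ)
    (hρ_int : IntegrableOn ρ (Ioi (0 : ℝ)))
    (m : ℝ → ℝ)
    (hm : ∀ x : ℝ, 0 < x → m x = ∫ μ in Ioi (0 : ℝ), ρ μ / (x + μ))
    (n : ℕ) (x : ℝ) (hx : 0 < x) :
    0 ≤ (-1 : ℝ) ^ n * iteratedDeriv n m x := by
  rw [stieltjes_aux_rep ρ hρ_meas hρ_int m hm n x hx]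
  have hI : 0 ≤ ∫ μ in Ioi (0:ℝ), ρ μ / (x + μ) ^ (n + 1) := by
    refine setIntegral_nonneg measurableSet_Ioi fun μ hμ => ?_
    have hμ' : (0:ℝ) < μ := hμ
    exact div_nonneg (hρ_nonneg μ hμ') (by positivity)
  have : (-1 : ℝ) ^ n * ((-1 : ℝ) ^ n * n.factorial
      * ∫ μ in Ioi (0:ℝ), ρ μ / (x + μ) ^ (n + 1))
      = (n.factorial : ℝ) * ∫ μ in Ioi (0:ℝ), ρ μ / (x + μ) ^ (n + 1) := by
    rw [← mul_assoc, ← mul_assoc, ← mul_pow]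
    norm_num
  rw [this]
  positivity
end

section
/- (Proposition A.2, quantitative form.) Suppose the moments M_j = ∫₀^∞ μ^j ρ(μ) dμ are finite (i.e. μ ↦ μ^j ρ(μ) is integrable on (0,∞)) for all j = 0,…,N with N ≥ 1. Then for every x > 0, |m(x) − Σ_{j=0}^{N−1} (−1)^j M_j / x^{j+1}| ≤ M_N / x^{N+1}. -/
open MeasureTheory Set Finset

lemma key_frac (x μ : ℝ) (hx : x ≠ 0) (hxμ : x + μ ≠ 0) (N : ℕ) :
    1 / (x + μ) = (∑ j ∈ range N, (-1 : ℝ) ^ j * μ ^ j / x ^ (j + 1))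
      + (-1) ^ N * μ ^ N / (x ^ N * (x + μ)) := by
  induction N with
  | zero => simp
  | succ n ih =>
    rw [sum_range_succ, ih]
    have hxn : (x : ℝ) ^ n ≠ 0 := pow_ne_zero _ hx
    have hxn1 : (x : ℝ) ^ (n + 1) ≠ 0 := pow_ne_zero _ hx
    field_simp
    ring

/-- **Quantitative asymptotic expansion (Proposition A.2, quantitative form).**
If the moments `M j = ∫ μ in (0,∞), μ^j * ρ μ` are finite for `j = 0,…,N`
(`N ≥ 1`), then for every `x > 0`,
`|m x − Σ_{j=0}^{N−1} (−1)^j M j / x^{j+1}| ≤ M N / x^{N+1}`. -/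
theorem stieltjes_moment_expansion_quantitative
    (ρ : ℝ → ℝ) (hρ_meas : Measurable ρ)
    (hρ_nonneg : ∀ μ : ℝ, 0 < μ → 0 ≤ ρ μ)
    (hρ_int : IntegrableOn ρ (Ioi (0 : ℝ)))
    (m : ℝ → ℝ)
    (hm : ∀ x : ℝ, 0 < x → m x = ∫ μ in Ioi (0 : ℝ), ρ μ / (x + μ))
    (M : ℕ → ℝ)
    (hM : ∀ j : ℕ, M j = ∫ μ in Ioi (0 : ℝ), μ ^ j * ρ μ)
    (N : ℕ) (hN : 1 ≤ N)
    (hMfin : ∀ j : ℕ, j ≤ N → IntegrableOn (fun μ : ℝ => μ ^ j * ρ μ) (Ioi (0 : ℝ)))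
    (x : ℝ) (hx : 0 < x) :
    |m x - ∑ j ∈ range N, (-1 : ℝ) ^ j * M j / x ^ (j + 1)| ≤ M N / x ^ (N + 1) := by
  have hx' : x ≠ 0 := ne_of_gt hx
  set g : ℕ → ℝ → ℝ := fun j μ => ((-1 : ℝ) ^ j / x ^ (j + 1)) * (μ ^ j * ρ μ) with hg
  set r : ℝ → ℝ := fun μ => ((-1 : ℝ) ^ N / x ^ N) * (μ ^ N * ρ μ / (x + μ)) with hr
  -- pointwise identity on Ioi 0
  have hid : ∀ μ ∈ Ioi (0 : ℝ),
      ρ μ / (x + μ) = (∑ j ∈ range N, g j μ) + r μ := by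
    intro μ hμ
    have hμ0 : (0 : ℝ) < μ := hμ
    have hxμ : x + μ ≠ 0 := by positivity
    have hk := key_frac x μ hx' hxμ N
    have : ρ μ / (x + μ) = ρ μ * (1 / (x + μ)) := by ring
    rw [this, hk, mul_add, Finset.mul_sum]
    congr 1
    · exact Finset.sum_congr rfl fun j _ => by simp only [hg]; ring
    · simp only [hr]; field_simp
  -- integrability
  have hgint : ∀ j ∈ range N, IntegrableOn (g j) (Ioi (0 : ℝ)) := by
    intro j hj
    exact ((hMfin j (le_of_lt (mem_range.mp hj))).const_mul _)
  have hbound : IntegrableOn (fun μ : ℝ => (1 / x ^ (N + 1)) * (μ ^ N * ρ μ)) (Ioi 0) :=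
    (hMfin N le_rfl).const_mul _
  have hrmeas : Measurable r := by
    apply Measurable.const_mul
    exact (((measurable_id.pow_const N).mul hρ_meas).div (measurable_const.add measurable_id))
  have hrbound : ∀ μ ∈ Ioi (0 : ℝ), |r μ| ≤ (1 / x ^ (N + 1)) * (μ ^ N * ρ μ) := by
    intro μ hμ
    have hμ0 : (0 : ℝ) < μ := hμ
    have hρ0 : 0 ≤ ρ μ := hρ_nonneg μ hμ0
    have hxμ : (0 : ℝ) < x + μ := by positivity
    have h1 : |r μ| = (1 / x ^ N) * (μ ^ N * ρ μ / (x + μ)) := by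
      have hnn : (0:ℝ) ≤ μ ^ N * ρ μ / (x + μ) := by positivity
      rw [hr, abs_mul, abs_of_nonneg hnn, abs_div, abs_pow, abs_neg, abs_one, one_pow,
        abs_of_pos (pow_pos hx N)]
    rw [h1]
    have h2 : μ ^ N * ρ μ / (x + μ) ≤ μ ^ N * ρ μ / x :=
      div_le_div_of_nonneg_left (by positivity) hx (by linarith)
    calc (1 / x ^ N) * (μ ^ N * ρ μ / (x + μ)) ≤ (1 / x ^ N) * (μ ^ N * ρ μ / x) := by
          exact mul_le_mul_of_nonneg_left h2 (by positivity)
      _ = (1 / x ^ (N + 1)) * (μ ^ N * ρ μ) := by rw [pow_succ]; ring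
  have hrint : IntegrableOn r (Ioi (0 : ℝ)) := by
    apply Integrable.mono' hbound hrmeas.aestronglyMeasurable.restrict
    filter_upwards [ae_restrict_mem measurableSet_Ioi] with μ hμ
    exact hrbound μ hμ
  have hsumint : IntegrableOn (fun μ => ∑ j ∈ range N, g j μ) (Ioi (0 : ℝ)) :=
    integrable_finset_sum _ hgint
  -- compute m x
  have hmx : m x = (∑ j ∈ range N, (-1 : ℝ) ^ j * M j / x ^ (j + 1))
      + ∫ μ in Ioi (0 : ℝ), r μ := by
    rw [hm x hx, setIntegral_congr_fun measurableSet_Ioi hid,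
      integral_add hsumint hrint, integral_finset_sum _ hgint]
    congr 1
    refine Finset.sum_congr rfl fun j _ => ?_
    rw [hg]
    simp only []
    rw [integral_const_mul, ← hM j]
    ring
  rw [hmx]
  have h3 : (∑ j ∈ range N, (-1 : ℝ) ^ j * M j / x ^ (j + 1))
      + (∫ μ in Ioi (0 : ℝ), r μ)
      - ∑ j ∈ range N, (-1 : ℝ) ^ j * M j / x ^ (j + 1) = ∫ μ in Ioi (0 : ℝ), r μ := by
    ring
  rw [h3]
  calc |∫ μ in Ioi (0 : ℝ), r μ| ≤ ∫ μ in Ioi (0 : ℝ), |r μ| := by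
        simpa [Real.norm_eq_abs] using norm_integral_le_integral_norm (μ := volume.restrict (Ioi (0:ℝ))) r
    _ ≤ ∫ μ in Ioi (0 : ℝ), (1 / x ^ (N + 1)) * (μ ^ N * ρ μ) := by
        apply integral_mono_ae hrint.abs hbound
        filter_upwards [ae_restrict_mem measurableSet_Ioi] with μ hμ
        exact hrbound μ hμ
    _ = M N / x ^ (N + 1) := by
        rw [integral_const_mul, ← hM N]; ring
end

section
/- (Proposition A.2, asymptotic form.) Suppose the moments M_j = ∫₀^∞ μ^j ρ(μ) dμ are finite for all j = 0,…,N with N ≥ 1. Then as x → ∞, the function x ↦ m(x) − Σ_{j=0}^{N−1} (−1)^j M_j / x^{j+1} is big-O of x^{−(N+1)} (with respect to the filter at +∞ on ℝ). -/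
open MeasureTheory Set Finset Filter Asymptotics

/-- Geometric-type expansion of `1/(x+μ)`. -/
lemma stieltjes_key_identity (x μ : ℝ) (hx : x ≠ 0) (hxμ : x + μ ≠ 0) (n : ℕ) :
    1 / (x + μ) - ∑ j ∈ range n, (-1 : ℝ) ^ j * μ ^ j / x ^ (j + 1)
      = (-1) ^ n * μ ^ n / (x ^ n * (x + μ)) := by
  induction n with
  | zero => simp
  | succ n ih =>
    rw [Finset.sum_range_succ, ← sub_sub, ih]
    have hxn : (x : ℝ) ^ n ≠ 0 := pow_ne_zero _ hx
    have hxn1 : (x : ℝ) ^ (n + 1) ≠ 0 := pow_ne_zero _ hx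
    field_simp
    ring

/-- **Asymptotic expansion (Proposition A.2, asymptotic form).**
If the moments `M j = ∫ μ in (0,∞), μ^j * ρ μ` are finite for `j = 0,…,N`
(`N ≥ 1`), then as `x → +∞`,
`m x − Σ_{j=0}^{N−1} (−1)^j M j / x^{j+1} = O(x^{−(N+1)})`. -/
theorem stieltjes_moment_expansion_isBigO
    (ρ : ℝ → ℝ) (hρ_meas : Measurable ρ)
    (hρ_nonneg : ∀ μ : ℝ, 0 < μ → 0 ≤ ρ μ)
    (hρ_int : IntegrableOn ρ (Ioi (0 : ℝ)))
    (m : ℝ → ℝ)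
    (hm : ∀ x : ℝ, 0 < x → m x = ∫ μ in Ioi (0 : ℝ), ρ μ / (x + μ))
    (M : ℕ → ℝ)
    (hM : ∀ j : ℕ, M j = ∫ μ in Ioi (0 : ℝ), μ ^ j * ρ μ)
    (N : ℕ) (hN : 1 ≤ N)
    (hMfin : ∀ j : ℕ, j ≤ N → IntegrableOn (fun μ : ℝ => μ ^ j * ρ μ) (Ioi (0 : ℝ))) :
    (fun x : ℝ => m x - ∑ j ∈ range N, (-1 : ℝ) ^ j * M j / x ^ (j + 1))
      =O[atTop] fun x : ℝ => (x ^ (N + 1))⁻¹ := by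
  have hMN := hMfin N le_rfl
  rw [isBigO_iff]
  refine ⟨M N, ?_⟩
  filter_upwards [eventually_gt_atTop (0 : ℝ)] with x hx
  have hx0 : x ≠ 0 := ne_of_gt hx
  -- integrability of the main integrand
  have h1int : IntegrableOn (fun μ : ℝ => ρ μ / (x + μ)) (Ioi (0 : ℝ)) := by
    refine Integrable.mono' (hρ_int.mul_const x⁻¹)
      ((hρ_meas.div (measurable_const.add measurable_id)).aestronglyMeasurable) ?_
    filter_upwards [ae_restrict_mem measurableSet_Ioi] with μ hμ
    have hμ0 : (0 : ℝ) < μ := hμ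
    have hxμ : (0 : ℝ) < x + μ := by linarith
    rw [Real.norm_eq_abs, abs_div, abs_of_nonneg (hρ_nonneg μ hμ0),
      abs_of_pos hxμ, div_eq_mul_inv]
    gcongr
    · exact hρ_nonneg μ hμ0
    · linarith
  -- integrability of each sum term
  have h2terms : ∀ j ∈ range N,
      IntegrableOn (fun μ : ℝ => (-1 : ℝ) ^ j * (μ ^ j * ρ μ) / x ^ (j + 1))
        (Ioi (0 : ℝ)) := by
    intro j hj
    exact ((hMfin j (le_of_lt (Finset.mem_range.mp hj))).const_mul
      ((-1 : ℝ) ^ j)).div_const _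
  have h2int : IntegrableOn
      (fun μ : ℝ => ∑ j ∈ range N, (-1 : ℝ) ^ j * (μ ^ j * ρ μ) / x ^ (j + 1))
      (Ioi (0 : ℝ)) :=
    integrable_finset_sum _ h2terms
  -- rewrite the difference as a single integral
  have hsum : ∑ j ∈ range N, (-1 : ℝ) ^ j * M j / x ^ (j + 1)
      = ∫ μ in Ioi (0 : ℝ),
          ∑ j ∈ range N, (-1 : ℝ) ^ j * (μ ^ j * ρ μ) / x ^ (j + 1) := by
    rw [integral_finset_sum _ h2terms]
    refine Finset.sum_congr rfl fun j hj => ?_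
    rw [hM j, ← integral_const_mul, ← integral_div]
  have hdiff : m x - ∑ j ∈ range N, (-1 : ℝ) ^ j * M j / x ^ (j + 1)
      = ∫ μ in Ioi (0 : ℝ),
          (ρ μ / (x + μ)
            - ∑ j ∈ range N, (-1 : ℝ) ^ j * (μ ^ j * ρ μ) / x ^ (j + 1)) := by
    rw [hm x hx, hsum, integral_sub h1int h2int]
  rw [hdiff]
  -- bound the integral
  have hbound : ‖∫ μ in Ioi (0 : ℝ),
      (ρ μ / (x + μ)
        - ∑ j ∈ range N, (-1 : ℝ) ^ j * (μ ^ j * ρ μ) / x ^ (j + 1))‖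
      ≤ ∫ μ in Ioi (0 : ℝ), (μ ^ N * ρ μ) * (x ^ (N + 1))⁻¹ := by
    refine norm_integral_le_of_norm_le (hMN.mul_const _) ?_
    filter_upwards [ae_restrict_mem measurableSet_Ioi] with μ hμ
    have hμ0 : (0 : ℝ) < μ := hμ
    have hxμ : (0 : ℝ) < x + μ := by linarith
    have hkey := stieltjes_key_identity x μ hx0 (ne_of_gt hxμ) N
    have heq : ρ μ / (x + μ)
        - ∑ j ∈ range N, (-1 : ℝ) ^ j * (μ ^ j * ρ μ) / x ^ (j + 1)
        = ρ μ * ((-1) ^ N * μ ^ N / (x ^ N * (x + μ))) := by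
      rw [← hkey, mul_sub, Finset.mul_sum]
      congr 1
      · ring
      · exact Finset.sum_congr rfl fun j _ => by ring
    rw [heq, Real.norm_eq_abs, abs_mul, abs_of_nonneg (hρ_nonneg μ hμ0), abs_div,
      abs_mul, abs_pow, abs_pow, abs_neg, abs_one, one_pow, one_mul,
      abs_mul, abs_of_pos hμ0, abs_of_pos (pow_pos hx N), abs_of_pos hxμ]
    rw [div_eq_mul_inv]
    have h1 : x ^ (N + 1) ≤ x ^ N * (x + μ) := by
      rw [pow_succ]
      gcongr
      linarith
    calc ρ μ * (μ ^ N * (x ^ N * (x + μ))⁻¹)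
        ≤ ρ μ * (μ ^ N * (x ^ (N + 1))⁻¹) := by
          gcongr
          all_goals first
            | exact hρ_nonneg μ hμ0
            | exact pow_pos hx _
            | exact h1
            | positivity
      _ = μ ^ N * ρ μ * (x ^ (N + 1))⁻¹ := by ring
  refine hbound.trans ?_
  rw [integral_mul_const, ← hM N, Real.norm_eq_abs,
    abs_of_pos (inv_pos.mpr (pow_pos hx _))]
end
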